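/- arXiv:2603.13687 — 4 statements merged into one kernel-verified Lean document; each statement's English description precedes it below -/
import Mathlib

section
/- Fix p ∈ (0,1) and λ > 0, let ρ* ∈ (0,1) be the unique root of h(ρ) = 4ρ⁶ + 4λρ^(5+p) − 1 − λ, and define α* = ln 2 / ln(1/ρ*). Then (5+p)/2 < α* < 3. -/
open Set

theorem stmt_6 (p lam ρ : ℝ) (hp : p ∈ Ioo (0:ℝ) 1) (hlam : 0 < lam)
    (hρ : ρ ∈ Ioo (0:ℝ) 1)
    (hroot : 4 * ρ ^ (6:ℝ) + 4 * lam * ρ ^ (5 + p) - 1 - lam = 0) :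
    (5 + p) / 2 < Real.log 2 / Real.log (1 / ρ) ∧
      Real.log 2 / Real.log (1 / ρ) < 3 := by
  obtain ⟨hρ0, hρ1⟩ := hρ
  obtain ⟨hp0, hp1⟩ := hp
  have hL : Real.log ρ < 0 := Real.log_neg hρ0 hρ1
  set L := Real.log ρ with hLdef
  have hlog2 : 0 < Real.log 2 := Real.log_pos (by norm_num)
  have h5p0 : (0:ℝ) < 5 + p := by linarith
  have hlog1ρ : Real.log (1/ρ) = -L := by rw [one_div, Real.log_inv]
  have h6 : ρ ^ (6:ℝ) = Real.exp (6 * L) := by rw [Real.rpow_def_of_pos hρ0, mul_comm]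
  have h5p : ρ ^ (5+p) = Real.exp ((5+p) * L) := by rw [Real.rpow_def_of_pos hρ0, mul_comm]
  have hexp2 : Real.exp (-(2 * Real.log 2)) = 1/4 := by
    rw [Real.exp_neg, show (2:ℝ) * Real.log 2 = Real.log 4 by
      rw [show (4:ℝ) = 2^(2:ℕ) by norm_num, Real.log_pow]; push_cast; ring,
      Real.exp_log (by norm_num : (0:ℝ) < 4)]
    norm_num
  -- upper bound on L : L < -(log 2)/3
  have hLu : L < -(Real.log 2) / 3 := by
    by_contra h
    push_neg at h
    have h1 : (1:ℝ) ≤ 4 * ρ ^ (6:ℝ) := by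
      rw [h6]
      have h6L : -(2 * Real.log 2) ≤ 6 * L := by linarith
      have := Real.exp_le_exp.mpr h6L
      rw [hexp2] at this
      linarith
    have h2 : lam < 4 * lam * ρ ^ (5+p) := by
      rw [h5p]
      have hlt : -(2 * Real.log 2) < (5+p) * L := by
        nlinarith [mul_le_mul_of_nonneg_left h (le_of_lt h5p0)]
      have := Real.exp_lt_exp.mpr hlt
      rw [hexp2] at this
      nlinarith [Real.exp_pos ((5+p)*L)]
    linarith
  -- lower bound on L : -(2 log 2)/(5+p) < L
  have hLl : -(2 * Real.log 2) / (5+p) < L := by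
    by_contra h
    push_neg at h
    have hmul : L * (5+p) ≤ -(2 * Real.log 2) := (le_div_iff₀ h5p0).mp h
    have h2 : 4 * lam * ρ ^ (5+p) ≤ lam := by
      rw [h5p]
      have h5pL : (5+p) * L ≤ -(2 * Real.log 2) := by linarith [mul_comm L (5+p)]
      have := Real.exp_le_exp.mpr h5pL
      rw [hexp2] at this
      nlinarith
    have h1 : 4 * ρ ^ (6:ℝ) < 1 := by
      rw [h6]
      have h6L : 6 * L < -(2 * Real.log 2) := by nlinarith
      have := Real.exp_lt_exp.mpr h6L
      rw [hexp2] at this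
      linarith
    linarith
  rw [hlog1ρ]
  have hnL : 0 < -L := by linarith
  have hmul : -(2 * Real.log 2) < L * (5+p) := (div_lt_iff₀ h5p0).mp hLl
  constructor
  · rw [div_lt_div_iff₀ (by norm_num : (0:ℝ) < 2) hnL]
    nlinarith
  · rw [div_lt_iff₀ hnL]
    nlinarith
end

section
/- Let p ∈ (0,1), B, C > 0, A : (0,∞) → (0,∞) with A(Q) = a·Q² for some a > 0, and for each Q let r*(Q) be the unique positive solution of 4A(Q) = 2B·r⁶ + (1+p)C·r^(5+p). Then for every f ∈ (0,1) and Q > 0: r*(fQ) < f^(1/3)·r*(Q) and r*(fQ) > f^(2/(5+p))·r*(Q). -/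
open Set

theorem stmt_10 (p B C a : ℝ) (hp : p ∈ Ioo (0:ℝ) 1) (hB : 0 < B) (hC : 0 < C)
    (ha : 0 < a) (rstar : ℝ → ℝ)
    (hroot : ∀ Q : ℝ, 0 < Q → 0 < rstar Q ∧
      4 * (a * Q ^ (2:ℝ)) = 2 * B * rstar Q ^ (6:ℝ) + (1 + p) * C * rstar Q ^ (5 + p)) :
    ∀ f : ℝ, f ∈ Ioo (0:ℝ) 1 → ∀ Q : ℝ, 0 < Q →
      rstar (f * Q) < f ^ ((1:ℝ) / 3) * rstar Q ∧
      f ^ (2 / (5 + p)) * rstar Q < rstar (f * Q) := by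
  obtain ⟨hp0, hp1⟩ := hp
  have h5p : (0:ℝ) < 5 + p := by linarith
  have gmono : ∀ x y : ℝ, 0 < x → x < y →
      2*B*x^(6:ℝ)+(1+p)*C*x^(5+p) < 2*B*y^(6:ℝ)+(1+p)*C*y^(5+p) := by
    intro x y hx hxy
    have h1 : x^(6:ℝ) < y^(6:ℝ) := Real.rpow_lt_rpow hx.le hxy (by norm_num)
    have h2 : x^(5+p) < y^(5+p) := Real.rpow_lt_rpow hx.le hxy h5p
    have a1 := mul_lt_mul_of_pos_left h1 (show (0:ℝ) < 2*B by linarith)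
    have a2 := mul_lt_mul_of_pos_left h2 (show (0:ℝ) < (1+p)*C by positivity)
    linarith
  intro f hf Q hQ
  obtain ⟨hf0, hf1⟩ := hf
  obtain ⟨hr, hrE⟩ := hroot Q hQ
  obtain ⟨hrf, hrfE⟩ := hroot (f*Q) (mul_pos hf0 hQ)
  have hfQ2 : (f*Q)^(2:ℝ) = f^(2:ℝ) * Q^(2:ℝ) := Real.mul_rpow hf0.le hQ.le
  have key : 2*B*(rstar (f*Q))^(6:ℝ)+(1+p)*C*(rstar (f*Q))^(5+p)
      = f^(2:ℝ) * (2*B*(rstar Q)^(6:ℝ)+(1+p)*C*(rstar Q)^(5+p)) := by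
    rw [← hrE, ← hrfE, hfQ2]; ring
  have hr6 : 0 < (rstar Q)^(6:ℝ) := Real.rpow_pos_of_pos hr _
  have hr5p : 0 < (rstar Q)^(5+p) := Real.rpow_pos_of_pos hr _
  constructor
  · by_contra h
    push_neg at h
    have ht : 0 < f^((1:ℝ)/3) * rstar Q := mul_pos (Real.rpow_pos_of_pos hf0 _) hr
    have e1 : (f^((1:ℝ)/3) * rstar Q)^(6:ℝ) = f^(2:ℝ) * (rstar Q)^(6:ℝ) := by
      rw [Real.mul_rpow (Real.rpow_pos_of_pos hf0 _).le hr.le, ← Real.rpow_mul hf0.le]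
      norm_num
    have e2 : (f^((1:ℝ)/3) * rstar Q)^(5+p) = f^((5+p)/3) * (rstar Q)^(5+p) := by
      rw [Real.mul_rpow (Real.rpow_pos_of_pos hf0 _).le hr.le, ← Real.rpow_mul hf0.le,
        show (1:ℝ)/3*(5+p) = (5+p)/3 by ring]
    have hexp1 : f^(2:ℝ) < f^((5+p)/3) :=
      Real.rpow_lt_rpow_of_exponent_gt hf0 hf1 (by linarith)
    have hlt : f^(2:ℝ)*(2*B*(rstar Q)^(6:ℝ)+(1+p)*C*(rstar Q)^(5+p)) <
        2*B*(f^((1:ℝ)/3)*rstar Q)^(6:ℝ)+(1+p)*C*(f^((1:ℝ)/3)*rstar Q)^(5+p) := by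
      rw [e1, e2]
      nlinarith [mul_pos (mul_pos (show (0:ℝ) < 1+p by linarith) hC) hr5p, hexp1]
    have hle : 2*B*(f^((1:ℝ)/3)*rstar Q)^(6:ℝ)+(1+p)*C*(f^((1:ℝ)/3)*rstar Q)^(5+p) ≤
        2*B*(rstar (f*Q))^(6:ℝ)+(1+p)*C*(rstar (f*Q))^(5+p) := by
      rcases h.lt_or_eq with h' | h'
      · exact (gmono _ _ ht h').le
      · rw [h']
    linarith [key]
  · by_contra h
    push_neg at h
    have ht : 0 < f^(2/(5+p)) * rstar Q := mul_pos (Real.rpow_pos_of_pos hf0 _) hr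
    have e1 : (f^(2/(5+p)) * rstar Q)^(6:ℝ) = f^(12/(5+p)) * (rstar Q)^(6:ℝ) := by
      rw [Real.mul_rpow (Real.rpow_pos_of_pos hf0 _).le hr.le, ← Real.rpow_mul hf0.le,
        show 2/(5+p)*(6:ℝ) = 12/(5+p) by ring]
    have e2 : (f^(2/(5+p)) * rstar Q)^(5+p) = f^(2:ℝ) * (rstar Q)^(5+p) := by
      rw [Real.mul_rpow (Real.rpow_pos_of_pos hf0 _).le hr.le, ← Real.rpow_mul hf0.le,
        show 2/(5+p)*(5+p) = (2:ℝ) by field_simp]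
    have hexp1 : f^(12/(5+p)) < f^(2:ℝ) :=
      Real.rpow_lt_rpow_of_exponent_gt hf0 hf1 (by rw [lt_div_iff₀ h5p]; linarith)
    have hlt : 2*B*(f^(2/(5+p))*rstar Q)^(6:ℝ)+(1+p)*C*(f^(2/(5+p))*rstar Q)^(5+p) <
        f^(2:ℝ)*(2*B*(rstar Q)^(6:ℝ)+(1+p)*C*(rstar Q)^(5+p)) := by
      rw [e1, e2]
      nlinarith [mul_pos hB hr6, hexp1]
    have hle : 2*B*(rstar (f*Q))^(6:ℝ)+(1+p)*C*(rstar (f*Q))^(5+p) ≤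
        2*B*(f^(2/(5+p))*rstar Q)^(6:ℝ)+(1+p)*C*(f^(2/(5+p))*rstar Q)^(5+p) := by
      rcases h.lt_or_eq with h' | h'
      · exact (gmono _ _ hrf h').le
      · rw [h']
    linarith [key]
end

section
/- Let B, C > 0 and p ∈ (0,1), and for each Q > 0 let r*(Q) be the unique positive root of 4a·Q² = 2B·r⁶ + (1+p)C·r^(5+p) (with a > 0 fixed). Then there is no pair of constants k, α > 0 such that r*(Q) = k·Q^(1/α) for all Q > 0. -/
/-!
A power law `r* = k Q^(1/α)` inverts to `Q = (r*/k)^α`, so the root equation would read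
`D r^(2α) = 2B r^6 + (1+p)C r^(5+p)` for every `r > 0`. Dividing by `r^(5+p)` gives
`D r^γ = 2B r^(1-p) + (1+p)C`: if `γ = 0` the left side is constant while the right side is not,
and if `γ ≠ 0` (so `D > 0`, from `r = 1`) some `r` makes the left side equal to `(1+p)C`,
forcing `2B r^(1-p) = 0`.
-/

open Set Real

theorem not_forall_mul_rpow_eq_mul_rpow_add {D γ c₁ c₂ q : ℝ}
    (hc₁ : 0 < c₁) (hc₂ : 0 < c₂) (hq : q ≠ 0) : ¬ ∀ x : ℝ, 0 < x → D * x ^ γ = c₁ * x ^ q + c₂ := by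
  intro h
  have h₁ := h 1 one_pos
  simp only [one_rpow, mul_one] at h₁
  by_cases hγ : γ = 0
  · have h₂ := h 2 two_pos
    simp only [hγ, rpow_zero, mul_one] at h₂
    have : (2 : ℝ) ^ q = 2 ^ (0 : ℝ) := by
      rw [rpow_zero]
      exact (mul_eq_left₀ hc₁.ne').1 (by linarith)
    exact hq ((rpow_right_inj two_pos (by norm_num)).1 this)
  · have hD : 0 < D := by linarith
    set x₀ := (c₂ / D) ^ γ⁻¹
    have hx₀ : 0 < x₀ := rpow_pos_of_pos (div_pos hc₂ hD) _
    have h₀ := h x₀ hx₀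
    rw [rpow_inv_rpow (div_pos hc₂ hD).le hγ, mul_div_cancel₀ _ hD.ne'] at h₀
    linarith [mul_pos hc₁ (rpow_pos_of_pos hx₀ q)]

theorem not_forall_mul_rpow_eq_add_mul_rpow {D γ c₁ c₂ e₁ e₂ : ℝ}
    (hc₁ : 0 < c₁) (hc₂ : 0 < c₂) (he : e₁ ≠ e₂) :
    ¬ ∀ x : ℝ, 0 < x → D * x ^ γ = c₁ * x ^ e₁ + c₂ * x ^ e₂ := by
  intro h
  refine not_forall_mul_rpow_eq_mul_rpow_add (D := D) (γ := γ - e₂) hc₁ hc₂ (sub_ne_zero.2 he)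
    fun x hx => ?_
  have hx₂ : x ^ e₂ ≠ 0 := (rpow_pos_of_pos hx e₂).ne'
  rw [rpow_sub hx, rpow_sub hx, mul_div_assoc', h x hx]
  field_simp

theorem stmt_11_general (p B C a : ℝ) (hp : p ∈ Ioo (0:ℝ) 1) (hB : 0 < B) (hC : 0 < C)
    (rstar : ℝ → ℝ)
    (hroot : ∀ Q : ℝ, 0 < Q → 0 < rstar Q ∧
      4 * a * Q ^ (2:ℝ) = 2 * B * rstar Q ^ (6:ℝ) + (1 + p) * C * rstar Q ^ (5 + p)) :
    ¬ ∃ k α : ℝ, 0 < k ∧ 0 < α ∧ ∀ Q : ℝ, 0 < Q → rstar Q = k * Q ^ (1 / α) := by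
  rintro ⟨k, α, hk, hα, hpow⟩
  have h1p : 0 < 1 + p := by linarith [hp.1]
  refine not_forall_mul_rpow_eq_add_mul_rpow (D := 4 * a / k ^ (2 * α)) (γ := 2 * α)
    (by positivity : 0 < 2 * B) (by positivity : 0 < (1 + p) * C)
    (by linarith [hp.2] : (6:ℝ) ≠ 5 + p) fun x hx => ?_
  have hxk : 0 < x / k := div_pos hx hk
  have hQ : 0 < (x / k) ^ α := rpow_pos_of_pos hxk α
  have hr : rstar ((x / k) ^ α) = x := by
    rw [hpow _ hQ, ← rpow_mul hxk.le, mul_one_div_cancel hα.ne', rpow_one,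
      mul_div_cancel₀ _ hk.ne']
  have h := (hroot _ hQ).2
  rw [hr, ← rpow_mul hxk.le, mul_comm α, div_rpow hx.le hk.le] at h
  rw [← h]
  ring

theorem stmt_11 (p B C a : ℝ) (hp : p ∈ Ioo (0:ℝ) 1) (hB : 0 < B) (hC : 0 < C)
    (ha : 0 < a) (rstar : ℝ → ℝ)
    (hroot : ∀ Q : ℝ, 0 < Q → 0 < rstar Q ∧
      4 * a * Q ^ (2:ℝ) = 2 * B * rstar Q ^ (6:ℝ) + (1 + p) * C * rstar Q ^ (5 + p)) :
    ¬ ∃ k α : ℝ, 0 < k ∧ 0 < α ∧ ∀ Q : ℝ, 0 < Q → rstar Q = k * Q ^ (1 / α) :=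
  stmt_11_general p B C a hp hB hC rstar hroot
end

section
/- Let n > 0, m ≠ k with m, k > 0, and B, C > 0, a > 0, s > 0. For each Q > 0 let r*(Q) be the unique positive root of n·a·Q^s = m·B·r^(n+m) + k·C·r^(n+k). Then r* is not a power law: there exist no constants K, β > 0 with r*(Q) = K·Q^β for all Q > 0. -/
open Set

theorem stmt_12 (n m k B C a s : ℝ) (hn : 0 < n) (hm : 0 < m) (hk : 0 < k)
    (hmk : m ≠ k) (hB : 0 < B) (hC : 0 < C) (ha : 0 < a) (hs : 0 < s)
    (rstar : ℝ → ℝ)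
    (hroot : ∀ Q : ℝ, 0 < Q → 0 < rstar Q ∧
      n * a * Q ^ s = m * B * rstar Q ^ (n + m) + k * C * rstar Q ^ (n + k)) :
    ¬ ∃ K β : ℝ, 0 < K ∧ 0 < β ∧ ∀ Q : ℝ, 0 < Q → rstar Q = K * Q ^ β := by
  rintro ⟨K, β, hK, hβ, hpow⟩
  set c1 : ℝ := m * B * K ^ (n + m) with hc1def
  set c2 : ℝ := k * C * K ^ (n + k) with hc2def
  have hc1 : 0 < c1 := by positivity
  have hc2 : 0 < c2 := by positivity
  set p : ℝ := β * (n + m) - s with hpdef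
  set q : ℝ := β * (n + k) - s with hqdef
  have hpq : p ≠ q := by
    intro h
    apply hmk
    have : β * (n + m) = β * (n + k) := by linarith [hpdef, hqdef]
    have := mul_left_cancel₀ hβ.ne' this
    linarith
  -- key equation: c1 * Q^p + c2 * Q^q = n * a for all Q > 0
  have key : ∀ Q : ℝ, 0 < Q → c1 * Q ^ p + c2 * Q ^ q = n * a := by
    intro Q hQ
    obtain ⟨hr, heq⟩ := hroot Q hQ
    rw [hpow Q hQ] at heq
    have hQb : (0:ℝ) ≤ Q ^ β := Real.rpow_nonneg hQ.le β
    have h1 : (K * Q ^ β) ^ (n + m) = K ^ (n + m) * Q ^ (β * (n + m)) := by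
      rw [Real.mul_rpow hK.le hQb, Real.rpow_mul hQ.le]
    have h2 : (K * Q ^ β) ^ (n + k) = K ^ (n + k) * Q ^ (β * (n + k)) := by
      rw [Real.mul_rpow hK.le hQb, Real.rpow_mul hQ.le]
    rw [h1, h2] at heq
    have hs1 : Q ^ p = Q ^ (β * (n + m)) * (Q ^ s)⁻¹ := by
      rw [hpdef, sub_eq_add_neg, Real.rpow_add hQ, Real.rpow_neg hQ.le]
    have hs2 : Q ^ q = Q ^ (β * (n + k)) * (Q ^ s)⁻¹ := by
      rw [hqdef, sub_eq_add_neg, Real.rpow_add hQ, Real.rpow_neg hQ.le]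
    have hQs : (0:ℝ) < Q ^ s := Real.rpow_pos_of_pos hQ s
    rw [hs1, hs2]
    field_simp
    simp only [hc1def, hc2def]
    linarith [heq]
  have e0 : c1 + c2 = n * a := by
    have := key 1 one_pos
    simpa using this
  set x : ℝ := (2:ℝ) ^ p with hxdef
  set y : ℝ := (2:ℝ) ^ q with hydef
  have e1 : c1 * x + c2 * y = n * a := key 2 (by norm_num)
  have e2 : c1 * (x * x) + c2 * (y * y) = n * a := by
    have h4 := key 4 (by norm_num)
    have hx4 : (4:ℝ) ^ p = x * x := by
      rw [show (4:ℝ) = 2 * 2 by norm_num, Real.mul_rpow (by norm_num) (by norm_num)]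
    have hy4 : (4:ℝ) ^ q = y * y := by
      rw [show (4:ℝ) = 2 * 2 by norm_num, Real.mul_rpow (by norm_num) (by norm_num)]
    rw [hx4, hy4] at h4
    exact h4
  have hfac : c1 * (x - 1) * (x - y) = 0 := by
    linear_combination (e2 - e0) - (y + 1) * (e1 - e0)
  have hxy : x = y := by
    rcases mul_eq_zero.mp hfac with h | h
    · rcases mul_eq_zero.mp h with h' | h'
      · exact absurd h' hc1.ne'
      · -- x = 1, then c2 * (y - 1) = 0 from e1 - e0, so y = 1
        have hx1 : x = 1 := by linarith
        have : c2 * (y - 1) = 0 := by linear_combination (e1 - e0) - c1 * hx1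
        have hy1 : y = 1 := by
          rcases mul_eq_zero.mp this with h'' | h''
          · exact absurd h'' hc2.ne'
          · linarith
        rw [hx1, hy1]
    · linarith
  apply hpq
  have hl : p * Real.log 2 = q * Real.log 2 := by
    rw [← Real.log_rpow (by norm_num : (0:ℝ) < 2) p, ← Real.log_rpow (by norm_num : (0:ℝ) < 2) q,
      ← hxdef, ← hydef, hxy]
  have hl2 : (0:ℝ) < Real.log 2 := Real.log_pos (by norm_num)
  exact mul_right_cancel₀ hl2.ne' hl
end
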